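/- (i) If ε ∈ Σ is periodic with smallest period T ≥ 1 and ε_T = 0, then μ(ε) is periodic with smallest period 2T. (ii) Conversely, if ε ∈ Σ is such that μ(ε) is periodic with smallest period U, then U is even, say U = 2T, and ε is periodic with smallest period T and satisfies ε_T = 0. -/
import Mathlib


/-- A 0-1 sequence: all values are at most 1. Index `k` corresponds to `ε_{k+1}` in the paper. -/
def isSeq (ε : ℕ → ℕ) : Prop := ∀ k, ε k ≤ 1

/-- The shift map σ. -/
def shift (ε : ℕ → ℕ) : ℕ → ℕ := fun n => ε (n + 1)

/-- The mirror image ε̄, (ε̄)_n = 1 - ε_n. -/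
def mirror (ε : ℕ → ℕ) : ℕ → ℕ := fun n => 1 - ε n

/-- Strict lexicographic order on sequences. -/
def lexLt (a b : ℕ → ℕ) : Prop := ∃ k, (∀ j, j < k → a j = b j) ∧ a k < b k

/-- Non-strict lexicographic order. -/
def lexLe (a b : ℕ → ℕ) : Prop := lexLt a b ∨ a = b

/-- ε is periodic with smallest period n ≥ 1. -/
def periodicSmallest (n : ℕ) (ε : ℕ → ℕ) : Prop :=
  1 ≤ n ∧ shift^[n] ε = ε ∧ ∀ j, 1 ≤ j → j < n → shift^[j] ε ≠ ε

/-- The doubling map μ: (μ(ε))_1 = 1, (μ(ε))_{2n} = ε_n, (μ(ε))_{2n+1} = 1 - ε_n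
(written with 0-based indexing). -/
def mu (ε : ℕ → ℕ) : ℕ → ℕ :=
  fun i => if i = 0 then 1 else if i % 2 = 1 then ε ((i - 1) / 2) else 1 - ε (i / 2 - 1)

lemma shift_iter (ε : ℕ → ℕ) (m n : ℕ) : shift^[m] ε n = ε (n + m) := by
  induction m generalizing ε n with
  | zero => rfl
  | succ m ih =>
    rw [Function.iterate_succ_apply, ih]
    exact congrArg ε (Nat.add_assoc n m 1)

lemma mu_zero (ε : ℕ → ℕ) : mu ε 0 = 1 := rfl

lemma mu_odd (ε : ℕ → ℕ) (k : ℕ) : mu ε (2 * k + 1) = ε k := by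
  unfold mu
  rw [if_neg (by omega), if_pos (by omega)]
  congr 1
  omega

lemma mu_even (ε : ℕ → ℕ) (k : ℕ) : mu ε (2 * k + 2) = 1 - ε k := by
  unfold mu
  rw [if_neg (by omega), if_neg (by omega)]
  have h : (2 * k + 2) / 2 - 1 = k := by omega
  rw [h]

/-- If `ε` has period `T` and `ε (T-1) = 0`, then `μ ε` has period `2T`. -/
lemma mu_period (ε : ℕ → ℕ) {T : ℕ} (hT : 1 ≤ T) (hp : shift^[T] ε = ε)
    (h0 : ε (T - 1) = 0) : shift^[2 * T] (mu ε) = mu ε := by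
  have hper : ∀ n, ε (n + T) = ε n := by
    intro n
    have := congrFun hp n
    rw [shift_iter] at this
    exact this
  funext i
  rw [shift_iter]
  rcases Nat.lt_or_ge i 1 with h | h
  · have hi : i = 0 := by omega
    subst hi
    rw [show 0 + 2 * T = 2 * (T - 1) + 2 from by omega, mu_even, h0, mu_zero]
  · by_cases hpar : i % 2 = 1
    · obtain ⟨k, hk⟩ : ∃ k, i = 2 * k + 1 := ⟨i / 2, by omega⟩
      subst hk
      rw [show 2 * k + 1 + 2 * T = 2 * (k + T) + 1 from by omega, mu_odd, mu_odd, hper]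
    · obtain ⟨k, hk⟩ : ∃ k, i = 2 * k + 2 := ⟨(i - 2) / 2, by omega⟩
      subst hk
      rw [show 2 * k + 2 + 2 * T = 2 * (k + T) + 2 from by omega, mu_even, mu_even, hper]

/-- If `μ ε` has period `2t` then `ε` has period `t` and `ε (t-1) = 0`. -/
lemma period_down (ε : ℕ → ℕ) (hseq : isSeq ε) {t : ℕ} (ht : 1 ≤ t)
    (h : shift^[2 * t] (mu ε) = mu ε) : shift^[t] ε = ε ∧ ε (t - 1) = 0 := by
  have hmu : ∀ n, mu ε (n + 2 * t) = mu ε n := by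
    intro n
    have := congrFun h n
    rw [shift_iter] at this
    exact this
  constructor
  · funext n
    rw [shift_iter]
    have := hmu (2 * n + 1)
    rw [show 2 * n + 1 + 2 * t = 2 * (n + t) + 1 from by omega, mu_odd, mu_odd] at this
    exact this
  · have h1 := hmu 0
    rw [show 0 + 2 * t = 2 * (t - 1) + 2 from by omega, mu_even, mu_zero] at h1
    have h2 := hseq (t - 1)
    omega

/-- `μ ε` can never have an odd period. -/
lemma mu_no_odd (ε : ℕ → ℕ) (hseq : isSeq ε) {s : ℕ}
    (h : shift^[2 * s + 1] (mu ε) = mu ε) : False := by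
  have hmu : ∀ n, mu ε (n + (2 * s + 1)) = mu ε n := by
    intro n
    have := congrFun h n
    rw [shift_iter] at this
    exact this
  have hA : ∀ m, 1 - ε (m + s) = ε m := by
    intro m
    have := hmu (2 * m + 1)
    rw [show 2 * m + 1 + (2 * s + 1) = 2 * (m + s) + 2 from by omega, mu_even, mu_odd] at this
    exact this
  have hB : ∀ m, ε (m + s + 1) = 1 - ε m := by
    intro m
    have := hmu (2 * m + 2)
    rw [show 2 * m + 2 + (2 * s + 1) = 2 * (m + s + 1) + 1 from by omega, mu_odd, mu_even] at this
    exact this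
  have hconst : ∀ m, ε (m + 1) = ε m := by
    intro m
    have h1 := hA (m + 1)
    have h2 := hB m
    have e1 := hseq m
    have e2 := hseq (m + 1)
    have e3 := hseq (m + s + 1)
    rw [show m + 1 + s = m + s + 1 from by omega] at h1
    omega
  have hall : ∀ m, ε m = ε 0 := by
    intro m
    induction m with
    | zero => rfl
    | succ n ih => rw [hconst n, ih]
  have hA0 := hA 0
  rw [Nat.zero_add, hall s] at hA0
  have := hseq 0
  omega

/-- (i) If ε has smallest period T and ε_T = 0 then μ(ε) has smallest period 2T.
(ii) If μ(ε) has smallest period U then U = 2T is even, ε has smallest period T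
and ε_T = 0. -/
theorem stmt7 (ε : ℕ → ℕ) (hseq : isSeq ε) :
    (∀ T, 1 ≤ T → periodicSmallest T ε → ε (T - 1) = 0 →
      periodicSmallest (2 * T) (mu ε)) ∧
    (∀ U, periodicSmallest U (mu ε) →
      ∃ T, U = 2 * T ∧ periodicSmallest T ε ∧ ε (T - 1) = 0) := by
  constructor
  · intro T hT hps h0
    obtain ⟨_, hp, hmin⟩ := hps
    refine ⟨by omega, mu_period ε hT hp h0, ?_⟩
    intro j hj1 hj2 hcon
    by_cases hpar : j % 2 = 1
    · obtain ⟨k, hk⟩ : ∃ k, j = 2 * k + 1 := ⟨j / 2, by omega⟩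
      rw [hk] at hcon
      exact mu_no_odd ε hseq hcon
    · obtain ⟨k, hk⟩ : ∃ k, j = 2 * k := ⟨j / 2, by omega⟩
      rw [hk] at hcon
      have hd := period_down ε hseq (t := k) (by omega) hcon
      exact hmin k (by omega) (by omega) hd.1
  · intro U hps
    obtain ⟨hU1, hp, hmin⟩ := hps
    by_cases hpar : U % 2 = 1
    · obtain ⟨k, hk⟩ : ∃ k, U = 2 * k + 1 := ⟨U / 2, by omega⟩
      rw [hk] at hp
      exact absurd hp (fun h => mu_no_odd ε hseq h)
    · obtain ⟨k, hk⟩ : ∃ k, U = 2 * k := ⟨U / 2, by omega⟩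
      have hk1 : 1 ≤ k := by omega
      rw [hk] at hp
      have hd := period_down ε hseq hk1 hp
      refine ⟨k, hk, ⟨hk1, hd.1, ?_⟩, hd.2⟩
      intro j hj1 hj2 hc
      have hj' : Function.IsPeriodicPt shift j ε := hc
      have hT' : Function.IsPeriodicPt shift k ε := hd.1
      have hgt : Function.IsPeriodicPt shift (Nat.gcd j k) ε := hj'.gcd hT'
      set t := Nat.gcd j k with htdef
      have ht1 : 1 ≤ t := Nat.gcd_pos_of_pos_left k (by omega)
      have htle : t ≤ j := Nat.le_of_dvd (by omega) (Nat.gcd_dvd_left j k)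
      obtain ⟨q, hq⟩ : t ∣ k := Nat.gcd_dvd_right j k
      have hq0 : q ≠ 0 := by rintro rfl; simp at hq; omega
      have hmul : Function.IsPeriodicPt shift (t * (q - 1)) ε := hgt.mul_const (q - 1)
      have hmul' : shift^[t * (q - 1)] ε = ε := hmul
      have hε : ε (t - 1) = 0 := by
        have hthis := congrFun hmul' (t - 1)
        rw [shift_iter] at hthis
        have h2 : t * (q - 1) + t = t * q := by
          rw [← Nat.mul_succ]
          congr 1
          omega
        have heq : t - 1 + t * (q - 1) = k - 1 := by omega
        rw [heq, hd.2] at hthis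
        exact hthis.symm
      have hgt' : shift^[t] ε = ε := hgt
      have hcontra := mu_period ε ht1 hgt' hε
      exact hmin (2 * t) (by omega) (by omega) hcontra
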